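/- arXiv:0812.3141 — 4 statements merged into one kernel-verified Lean document; each statement's English description precedes it below -/
import Mathlib

section
/- Let f : (-1, ∞) → ℝ be defined by f(x) = 2^(-2/3)·(1+x)^(-2) + 2^(1/3)·(1+x). Then for every x > -1, f(x) ≥ 3·2^(-2/3) + 3·2^(-14/3)·min(x², 1). -/
/-!
Writing `c = 2^(-2/3)` and `t = 1 + x`, the function is `c · (t⁻² + 2t)`, and
`t⁻² + 2t - 3 = (t - 1)² (2t + 1) / t²`. On `0 < t ≤ 2` the factor `(2t + 1) / t²` is at least
`5/4`, and on `t ≥ 2` the increasing function `t⁻² + 2t - 3` is at least its value `5/4` at `2`,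
so `t⁻² + 2t ≥ 3 + (5/4) · min ((t - 1)², 1)`, which is stronger than needed since `3/16 ≤ 5/4`.
-/

open Real

lemma two_rpow_one_third : (2 : ℝ) ^ ((1 : ℝ) / 3) = 2 * 2 ^ ((-2 : ℝ) / 3) := by
  rw [show (1 : ℝ) / 3 = 1 + (-2) / 3 by norm_num, rpow_add two_pos, rpow_one]

lemma two_rpow_neg_fourteen_thirds :
    (2 : ℝ) ^ ((-14 : ℝ) / 3) = 2 ^ ((-2 : ℝ) / 3) / 16 := by
  rw [show (-14 : ℝ) / 3 = (-2) / 3 - 4 by norm_num, rpow_sub two_pos]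
  norm_num

lemma inv_sq_add_two_mul_sub_three {t : ℝ} (ht : t ≠ 0) :
    (t ^ 2)⁻¹ + 2 * t - 3 = (t - 1) ^ 2 * (2 * t + 1) / t ^ 2 := by
  field_simp
  ring

lemma three_add_le_inv_sq_add_two_mul {t : ℝ} (ht : 0 < t) :
    3 + 5 / 4 * min ((t - 1) ^ 2) 1 ≤ (t ^ 2)⁻¹ + 2 * t := by
  suffices h : 5 / 4 * min ((t - 1) ^ 2) 1 ≤ (t - 1) ^ 2 * (2 * t + 1) / t ^ 2 by
    linarith [inv_sq_add_two_mul_sub_three ht.ne']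
  rw [le_div_iff₀ (by positivity)]
  rcases le_total t 2 with ht2 | ht2
  · have hsq : (t - 1) ^ 2 ≤ 1 := by nlinarith
    rw [min_eq_left hsq]
    nlinarith [mul_nonneg (sq_nonneg (t - 1)) (mul_nonneg (sub_nonneg.2 ht2) ht.le)]
  · have hsq : 1 ≤ (t - 1) ^ 2 := by nlinarith
    rw [min_eq_right hsq]
    nlinarith [mul_nonneg (sub_nonneg.2 ht2) (sq_nonneg t)]

/-- For `f x = 2^(-2/3) (1+x)^(-2) + 2^(1/3) (1+x)` and every `x > -1`,
`f x ≥ 3·2^(-2/3) + 3·2^(-14/3)·min(x², 1)`. -/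
theorem stmt_1 (x : ℝ) (hx : x > -1) :
    (2:ℝ) ^ ((-2:ℝ)/3) * (1 + x) ^ ((-2:ℝ)) + (2:ℝ) ^ ((1:ℝ)/3) * (1 + x)
      ≥ 3 * (2:ℝ) ^ ((-2:ℝ)/3) + 3 * (2:ℝ) ^ ((-14:ℝ)/3) * min (x ^ 2) 1 := by
  have ht : 0 < 1 + x := by linarith
  have key := three_add_le_inv_sq_add_two_mul ht
  rw [add_sub_cancel_left] at key
  rw [two_rpow_one_third, two_rpow_neg_fourteen_thirds, rpow_neg ht.le, rpow_two]
  have hc : 0 < (2 : ℝ) ^ ((-2 : ℝ) / 3) := by positivity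
  have hm : 0 ≤ min (x ^ 2) 1 := le_min (sq_nonneg x) zero_le_one
  linarith [mul_le_mul_of_nonneg_left key hc.le, mul_nonneg hc.le hm]
end

section
/- Let s : [0,1] → ℝ be twice continuously differentiable, and let I = [a, b] ⊆ [0,1] with center c and length ℓ = b − a. Then |∫_I (s(x) − s(c))² dx − s'(c)²·ℓ³/12| ≤ L·ℓ⁴·‖s''‖_∞·(‖s'‖_∞ + ‖s''‖_∞) for some absolute constant L. -/
/-!
Write `s x - s c = v x + R x` with `v x = (x - c) * s' c`. As `s'` is `M₂`-Lipschitz, the mean value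
theorem applied to `R` gives `|R x| ≤ M₂ (x - c)²`, while `|v x| ≤ M₁ ℓ / 2`. Hence pointwise
`|(v + R)² - v²| ≤ |R| (|R| + 2 |v|) ≤ M₂ ℓ² (M₂ ℓ² + M₁ ℓ) / 4`, and `∫_I v² = s'(c)² ℓ³ / 12`.
Integrating over `I` and using `ℓ ≤ 1` gives the claim with `L = 1`.
-/

open Set

theorem integral_sub_midpoint_mul_sq (a b d : ℝ) :
    ∫ x in a..b, ((x - (a + b) / 2) * d) ^ 2 = d ^ 2 * (b - a) ^ 3 / 12 := by
  simp only [mul_pow, intervalIntegral.integral_mul_const]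
  rw [intervalIntegral.integral_comp_sub_right (· ^ 2), integral_pow]
  ring

theorem abs_sq_sub_sq_le {u v δ V : ℝ} (huv : |u - v| ≤ δ) (hv : |v| ≤ V) :
    |u ^ 2 - v ^ 2| ≤ δ * (δ + 2 * V) := by
  have hsum : |u + v| ≤ δ + 2 * V :=
    calc |u + v| = |(u - v) + 2 * v| := by ring_nf
      _ ≤ |u - v| + 2 * |v| := by grw [abs_add_le, abs_mul, abs_two]
      _ ≤ δ + 2 * V := by linarith
  rw [sq_sub_sq, abs_mul, mul_comm δ]
  exact mul_le_mul hsum huv (abs_nonneg _) ((abs_nonneg _).trans hsum)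

theorem abs_integral_sq_sub_integral_sq_le {f g : ℝ → ℝ} {a b δ V : ℝ} (hab : a ≤ b)
    (hf : IntervalIntegrable (fun x ↦ f x ^ 2) MeasureTheory.volume a b)
    (hg : IntervalIntegrable (fun x ↦ g x ^ 2) MeasureTheory.volume a b)
    (hfg : ∀ x ∈ Icc a b, |f x - g x| ≤ δ) (hgV : ∀ x ∈ Icc a b, |g x| ≤ V) :
    |(∫ x in a..b, f x ^ 2) - ∫ x in a..b, g x ^ 2| ≤ δ * (δ + 2 * V) * (b - a) := by
  rw [← intervalIntegral.integral_sub hf hg, ← abs_of_nonneg (sub_nonneg.2 hab)]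
  refine intervalIntegral.norm_integral_le_of_norm_le_const
    (f := fun x ↦ f x ^ 2 - g x ^ 2) fun x hx ↦ ?_
  rw [uIoc_of_le hab] at hx
  exact abs_sq_sub_sq_le (hfg x (Ioc_subset_Icc_self hx)) (hgV x (Ioc_subset_Icc_self hx))

section Taylor

variable {E : Type*} [NormedAddCommGroup E] [NormedSpace ℝ E] {f : ℝ → E} {S : Set ℝ}
  {c x : ℝ}

theorem norm_sub_sub_deriv_smul_le {K : ℝ} (hS : Convex ℝ S) (hc : c ∈ S) (hx : x ∈ S)
    (hf : ∀ t ∈ S, DifferentiableAt ℝ f t)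
    (hf' : ∀ t ∈ S, ‖deriv f t - deriv f c‖ ≤ K * |t - c|) :
    ‖f x - f c - (x - c) • deriv f c‖ ≤ K * (x - c) ^ 2 := by
  rcases eq_or_ne x c with rfl | hxc
  · simp
  have hK : 0 ≤ K :=
    nonneg_of_mul_nonneg_left ((norm_nonneg _).trans (hf' x hx)) (abs_pos.2 (sub_ne_zero.2 hxc))
  have hsub : uIcc c x ⊆ S := hS.ordConnected.uIcc_subset hc hx
  have hg : ∀ t ∈ S, HasDerivAt (fun t ↦ f t - t • deriv f c) (deriv f t - deriv f c) t :=
    fun t ht ↦ by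
      simpa only [one_smul] using
        (hf t ht).hasDerivAt.fun_sub ((hasDerivAt_id' t).smul_const (deriv f c))
  have hmvt := Convex.norm_image_sub_le_of_norm_deriv_le (C := K * |x - c|)
    (fun t ht ↦ (hg t (hsub ht)).differentiableAt) (fun t ht ↦ ?_) (convex_uIcc c x)
    left_mem_uIcc right_mem_uIcc
  · calc ‖f x - f c - (x - c) • deriv f c‖
          = ‖(f x - x • deriv f c) - (f c - c • deriv f c)‖ := by rw [sub_smul]; abel_nf
      _ ≤ K * |x - c| * ‖x - c‖ := hmvt
      _ = K * (x - c) ^ 2 := by rw [Real.norm_eq_abs, mul_assoc, ← sq, sq_abs]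
  · rw [(hg t (hsub ht)).deriv]
    exact (hf' t (hsub ht)).trans (mul_le_mul_of_nonneg_left (abs_sub_left_of_mem_uIcc ht) hK)

theorem norm_sub_sub_deriv_smul_le_of_norm_deriv_deriv_le {M : ℝ} (hS : Convex ℝ S)
    (hc : c ∈ S) (hx : x ∈ S) (hf : ∀ t ∈ S, DifferentiableAt ℝ f t)
    (hf' : ∀ t ∈ S, DifferentiableAt ℝ (deriv f) t) (hM : ∀ t ∈ S, ‖deriv (deriv f) t‖ ≤ M) :
    ‖f x - f c - (x - c) • deriv f c‖ ≤ M * (x - c) ^ 2 :=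
  norm_sub_sub_deriv_smul_le hS hc hx hf fun t ht ↦ by
    simpa only [Real.norm_eq_abs] using hS.norm_image_sub_le_of_norm_deriv_le hf' hM hc ht

end Taylor

/-- There is an absolute constant `L` such that: if `s` is C² with `|s'| ≤ M₁`
and `|s''| ≤ M₂` on `[0,1]`, and `I = [a,b] ⊆ [0,1]` has center `c` and length
`ℓ = b−a`, then `|∫_I (s−s(c))² − s'(c)²·ℓ³/12| ≤ L·ℓ⁴·M₂·(M₁+M₂)`. -/
theorem stmt_5 :
    ∃ L : ℝ, 0 < L ∧
      ∀ (s : ℝ → ℝ), ContDiff ℝ 2 s →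
      ∀ (M₁ M₂ : ℝ),
        (∀ x ∈ Set.Icc (0:ℝ) 1, |deriv s x| ≤ M₁) →
        (∀ x ∈ Set.Icc (0:ℝ) 1, |deriv (deriv s) x| ≤ M₂) →
      ∀ (a b : ℝ), 0 ≤ a → a < b → b ≤ 1 →
        |(∫ x in a..b, (s x - s ((a + b) / 2)) ^ 2)
            - (deriv s ((a + b) / 2)) ^ 2 * (b - a) ^ 3 / 12|
          ≤ L * (b - a) ^ 4 * M₂ * (M₁ + M₂) := by
  refine ⟨1, one_pos, fun s hs M₁ M₂ h1 h2 a b ha hab hb ↦ ?_⟩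
  have hI : Icc a b ⊆ Icc 0 1 := Icc_subset_Icc ha hb
  have hc : (a + b) / 2 ∈ Icc a b := ⟨by linarith, by linarith⟩
  have hdist : ∀ x ∈ Icc a b, |x - (a + b) / 2| ≤ (b - a) / 2 := fun x hx ↦
    abs_le.2 ⟨by linarith [hx.1], by linarith [hx.2]⟩
  rw [← integral_sub_midpoint_mul_sq]
  set c := (a + b) / 2
  have hM₁ : 0 ≤ M₁ := (abs_nonneg _).trans (h1 c (hI hc))
  have hM₂ : 0 ≤ M₂ := (abs_nonneg _).trans (h2 c (hI hc))
  have htaylor : ∀ x ∈ Icc a b, |(s x - s c) - (x - c) * deriv s c| ≤ M₂ * ((b - a) / 2) ^ 2 :=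
    fun x hx ↦ (norm_sub_sub_deriv_smul_le_of_norm_deriv_deriv_le (convex_Icc a b) hc hx
      (fun t _ ↦ hs.differentiable two_ne_zero t)
      (fun t _ ↦ (hs.deriv' (n := 1)).differentiable one_ne_zero t)
      (fun t ht ↦ h2 t (hI ht))).trans <| mul_le_mul_of_nonneg_left
        (sq_le_sq' (abs_le.1 (hdist x hx)).1 (abs_le.1 (hdist x hx)).2) hM₂
  have hlin : ∀ x ∈ Icc a b, |(x - c) * deriv s c| ≤ (b - a) / 2 * M₁ := fun x hx ↦ by
    rw [abs_mul]
    exact mul_le_mul (hdist x hx) (h1 c (hI hc)) (abs_nonneg _) (by linarith)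
  have hcont : Continuous s := hs.continuous
  refine (abs_integral_sq_sub_integral_sq_le hab.le
    ((by fun_prop : Continuous fun x ↦ (s x - s c) ^ 2).intervalIntegrable _ _)
    ((by fun_prop : Continuous fun x ↦ ((x - c) * deriv s c) ^ 2).intervalIntegrable _ _)
    htaylor hlin).trans ?_
  have hM : M₂ * (b - a) / 16 + M₁ / 4 ≤ M₁ + M₂ := by nlinarith
  calc _ = (b - a) ^ 4 * M₂ * (M₂ * (b - a) / 16 + M₁ / 4) := by ring
    _ ≤ (b - a) ^ 4 * M₂ * (M₁ + M₂) := by gcongr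
    _ = _ := by ring
end

section
/- Let s : [0,1] → ℝ be twice continuously differentiable, I = [a,b] ⊆ [0,1] an interval with length ℓ, and s_I its mean value on I. Then |∫_I (s(x) − s_I)² dx − (ℓ²/12)·∫_I s'(x)² dx| ≤ L·ℓ⁴·‖s''‖_∞·(‖s'‖_∞ + ‖s''‖_∞) for some absolute constant L. -/
/-!
Expand `s` around the midpoint `c` of `I` as `s x = s c + A (x - c) + g x` with `A = s' c`.
The affine part has mean zero and contributes exactly `A² ℓ³/12 = (ℓ²/12) ∫_I A²` to both
sides. The mean value theorem, applied to `s'` and then to `g`, gives `|s' - A| ≤ ‖s''‖ ℓ` and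
`|g| ≤ ‖s''‖ ℓ²` on `I`, so every remaining term is `O(ℓ⁴ ‖s''‖ (‖s'‖ + ℓ ‖s''‖))`.
-/

open Set intervalIntegral
open scoped Interval

namespace intervalIntegral

variable {a b : ℝ}

theorem integral_sub_const {f : ℝ → ℝ} (hf : ContinuousOn f [[a, b]]) (t : ℝ) :
    ∫ x in a..b, (f x - t) = (∫ x in a..b, f x) - (b - a) * t := by
  rw [integral_sub hf.intervalIntegrable intervalIntegrable_const, integral_const, smul_eq_mul]

theorem integral_sq_sub_const {f : ℝ → ℝ} (hf : ContinuousOn f [[a, b]]) (t : ℝ) :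
    ∫ x in a..b, (f x - t) ^ 2 =
      (∫ x in a..b, f x ^ 2) - 2 * t * (∫ x in a..b, f x) + (b - a) * t ^ 2 := by
  have h₁ : IntervalIntegrable (fun x => f x ^ 2) MeasureTheory.volume a b :=
    (hf.pow 2).intervalIntegrable
  have h₂ : IntervalIntegrable (fun x => 2 * t * f x) MeasureTheory.volume a b :=
    (continuousOn_const.mul hf).intervalIntegrable
  simp_rw [show ∀ x, (f x - t) ^ 2 = f x ^ 2 - 2 * t * f x + t ^ 2 from fun x => by ring]
  rw [integral_add (h₁.sub h₂) intervalIntegrable_const, integral_sub h₁ h₂, integral_const_mul,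
    integral_const, smul_eq_mul]

theorem integral_sq_sub_average {f : ℝ → ℝ} (hf : ContinuousOn f [[a, b]]) (t : ℝ) :
    ∫ x in a..b, (f x - (b - a)⁻¹ * ∫ y in a..b, f y) ^ 2 =
      (∫ x in a..b, (f x - t) ^ 2) - (b - a)⁻¹ * (∫ x in a..b, (f x - t)) ^ 2 := by
  rw [integral_sq_sub_const hf, integral_sq_sub_const hf, integral_sub_const hf]
  rcases eq_or_ne (b - a) 0 with h | h
  · obtain rfl : b = a := sub_eq_zero.1 h
    simp
  · field_simp
    ring

theorem integral_mul_add_sq {u v : ℝ → ℝ} (hu : ContinuousOn u [[a, b]])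
    (hv : ContinuousOn v [[a, b]]) (A : ℝ) :
    ∫ x in a..b, (A * u x + v x) ^ 2 =
      A ^ 2 * (∫ x in a..b, u x ^ 2) + 2 * A * (∫ x in a..b, u x * v x)
        + ∫ x in a..b, v x ^ 2 := by
  have h₁ : IntervalIntegrable (fun x => A ^ 2 * u x ^ 2) MeasureTheory.volume a b :=
    (continuousOn_const.mul (hu.pow 2)).intervalIntegrable
  have h₂ : IntervalIntegrable (fun x => 2 * A * (u x * v x)) MeasureTheory.volume a b :=
    (continuousOn_const.mul (hu.mul hv)).intervalIntegrable
  have h₃ : IntervalIntegrable (fun x => v x ^ 2) MeasureTheory.volume a b :=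
    (hv.pow 2).intervalIntegrable
  simp_rw [show ∀ x, (A * u x + v x) ^ 2 = A ^ 2 * u x ^ 2 + 2 * A * (u x * v x) + v x ^ 2 from
    fun x => by ring]
  rw [integral_add (h₁.add h₂) h₃, integral_add h₁ h₂, integral_const_mul, integral_const_mul]

theorem integral_sq_eq_const_add {f : ℝ → ℝ} (hf : ContinuousOn f [[a, b]]) (A : ℝ) :
    ∫ x in a..b, f x ^ 2 =
      A ^ 2 * (b - a) + 2 * A * (∫ x in a..b, (f x - A)) + ∫ x in a..b, (f x - A) ^ 2 := by
  simpa using integral_mul_add_sq (u := fun _ => 1) (v := fun x => f x - A) continuousOn_const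
    (hf.sub continuousOn_const) A

theorem integral_sub_midpoint : ∫ x in a..b, (x - (a + b) / 2) = 0 := by
  rw [integral_comp_sub_right (fun x => x), integral_id]
  ring

theorem integral_sub_midpoint_sq : ∫ x in a..b, (x - (a + b) / 2) ^ 2 = (b - a) ^ 3 / 12 := by
  rw [integral_comp_sub_right (fun x => x ^ 2), integral_pow]
  ring

theorem integral_sq_sub_average_of_eq_affine_add {s g : ℝ → ℝ} {t A : ℝ}
    (hg : ContinuousOn g [[a, b]]) (hs : ∀ x, s x = t + A * (x - (a + b) / 2) + g x) :
    ∫ x in a..b, (s x - (b - a)⁻¹ * ∫ y in a..b, s y) ^ 2 =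
      A ^ 2 * ((b - a) ^ 3 / 12) + 2 * A * (∫ x in a..b, (x - (a + b) / 2) * g x)
        + (∫ x in a..b, g x ^ 2) - (b - a)⁻¹ * (∫ x in a..b, g x) ^ 2 := by
  have hlin : ContinuousOn (fun x : ℝ => x - (a + b) / 2) [[a, b]] := by fun_prop
  have hsplit : ∀ x, s x - t = A * (x - (a + b) / 2) + g x := fun x => by rw [hs]; ring
  have hs_cont : ContinuousOn s [[a, b]] := by
    simp_rw [show s = fun x => t + A * (x - (a + b) / 2) + g x from funext hs]
    exact (continuousOn_const.add (continuousOn_const.mul hlin)).add hg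
  have hmean : ∫ x in a..b, (A * (x - (a + b) / 2) + g x) = ∫ x in a..b, g x := by
    rw [integral_add (f := fun x => A * (x - (a + b) / 2))
        (continuousOn_const.mul hlin).intervalIntegrable hg.intervalIntegrable,
      integral_const_mul, integral_sub_midpoint, mul_zero, zero_add]
  rw [integral_sq_sub_average hs_cont t]
  simp_rw [hsplit]
  rw [integral_mul_add_sq hlin hg, hmean, integral_sub_midpoint_sq]

theorem abs_integral_le_of_abs_le {f : ℝ → ℝ} {C : ℝ} (hab : a ≤ b)
    (h : ∀ x ∈ Icc a b, |f x| ≤ C) : |∫ x in a..b, f x| ≤ C * (b - a) := by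
  have hIoc : Ι a b ⊆ Icc a b := by rw [uIoc_of_le hab]; exact Ioc_subset_Icc_self
  simpa [abs_of_nonneg (sub_nonneg.2 hab)] using
    norm_integral_le_of_norm_le_const (f := f) fun x hx => h x (hIoc hx)

theorem abs_integral_sq_le {f : ℝ → ℝ} {C : ℝ} (hab : a ≤ b)
    (h : ∀ x ∈ Icc a b, |f x| ≤ C) : |∫ x in a..b, f x ^ 2| ≤ C ^ 2 * (b - a) :=
  abs_integral_le_of_abs_le hab fun x hx => by
    rw [abs_pow]
    exact pow_le_pow_left₀ (abs_nonneg _) (h x hx) 2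

end intervalIntegral

theorem abs_sub_le_of_abs_deriv_le {f : ℝ → ℝ} {a b C x y : ℝ}
    (hf : ∀ z ∈ Icc a b, DifferentiableAt ℝ f z) (hC : ∀ z ∈ Icc a b, |deriv f z| ≤ C)
    (hx : x ∈ Icc a b) (hy : y ∈ Icc a b) : |f x - f y| ≤ C * (b - a) :=
  ((convex_Icc a b).norm_image_sub_le_of_norm_deriv_le hf hC hy hx).trans
    (mul_le_mul_of_nonneg_left (Real.dist_le_of_mem_Icc hx hy) ((abs_nonneg _).trans (hC x hx)))

theorem abs_sub_sub_deriv_mul_le {s : ℝ → ℝ} {a b c x M₂ : ℝ}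
    (hs : ∀ z ∈ Icc a b, DifferentiableAt ℝ s z)
    (hs' : ∀ z ∈ Icc a b, DifferentiableAt ℝ (deriv s) z)
    (hM₂ : ∀ z ∈ Icc a b, |deriv (deriv s) z| ≤ M₂) (hc : c ∈ Icc a b) (hx : x ∈ Icc a b) :
    |s x - s c - deriv s c * (x - c)| ≤ M₂ * (b - a) ^ 2 := by
  have hg : ∀ z ∈ Icc a b,
      HasDerivAt (fun y => s y - deriv s c * y) (deriv s z - deriv s c) z := fun z hz =>
    (hs z hz).hasDerivAt.sub (by simpa using (hasDerivAt_id' z).const_mul (deriv s c))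
  have h := abs_sub_le_of_abs_deriv_le (fun z hz => (hg z hz).differentiableAt)
    (fun z hz => (hg z hz).deriv ▸ abs_sub_le_of_abs_deriv_le hs' hM₂ hz hc) hx hc
  calc |s x - s c - deriv s c * (x - c)| = |s x - deriv s c * x - (s c - deriv s c * c)| := by
        ring_nf
    _ ≤ M₂ * (b - a) * (b - a) := h
    _ = M₂ * (b - a) ^ 2 := by ring

/-- The error left by `integral_sq_sub_average_of_eq_affine_add` and `integral_sq_eq_const_add`,
in which the `A²` terms cancel. -/
theorem abs_variance_expansion_sub_le {ℓ A J G R E H M₁ M₂ : ℝ} (hℓ : 0 ≤ ℓ) (hA : |A| ≤ M₁)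
    (hJ : |J| ≤ M₂ * ℓ ^ 4) (hG : |G| ≤ M₂ ^ 2 * ℓ ^ 5) (hR : |R| ≤ M₂ ^ 2 * ℓ ^ 5)
    (hE : |E| ≤ M₂ * ℓ ^ 2) (hH : |H| ≤ M₂ ^ 2 * ℓ ^ 3) :
    |A ^ 2 * (ℓ ^ 3 / 12) + 2 * A * J + G - R - ℓ ^ 2 / 12 * (A ^ 2 * ℓ + 2 * A * E + H)|
      ≤ 3 * ℓ ^ 4 * M₂ * (M₁ + ℓ * M₂) := by
  have hk : 0 ≤ ℓ ^ 2 / 12 := by positivity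
  have hM₁ : 0 ≤ M₁ := (abs_nonneg _).trans hA
  calc _ = |2 * A * (J - ℓ ^ 2 / 12 * E) + (G - R - ℓ ^ 2 / 12 * H)| := by ring_nf
    _ ≤ 2 * |A| * (|J| + ℓ ^ 2 / 12 * |E|) + (|G| + |R| + ℓ ^ 2 / 12 * |H|) := by
      refine (abs_add_le _ _).trans (add_le_add ?_ ?_)
      · rw [abs_mul, abs_mul, abs_two]
        gcongr
        exact (abs_sub _ _).trans_eq (by rw [abs_mul, abs_of_nonneg hk])
      · refine (abs_sub _ _).trans (add_le_add (abs_sub _ _) ?_)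
        rw [abs_mul, abs_of_nonneg hk]
    _ ≤ 2 * M₁ * (M₂ * ℓ ^ 4 + ℓ ^ 2 / 12 * (M₂ * ℓ ^ 2))
        + (M₂ ^ 2 * ℓ ^ 5 + M₂ ^ 2 * ℓ ^ 5 + ℓ ^ 2 / 12 * (M₂ ^ 2 * ℓ ^ 3)) := by
      gcongr
    _ ≤ 3 * ℓ ^ 4 * M₂ * (M₁ + ℓ * M₂) := by
      nlinarith [mul_nonneg hM₁ ((abs_nonneg _).trans hJ),
        mul_nonneg (sq_nonneg M₂) (pow_nonneg hℓ 5)]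

theorem abs_integral_sq_sub_average_sub_le {s : ℝ → ℝ} (hs : ContDiff ℝ 2 s) {a b M₁ M₂ : ℝ}
    (hab : a < b) (hM₁ : ∀ x ∈ Icc a b, |deriv s x| ≤ M₁)
    (hM₂ : ∀ x ∈ Icc a b, |deriv (deriv s) x| ≤ M₂) :
    |(∫ x in a..b, (s x - (b - a)⁻¹ * ∫ t in a..b, s t) ^ 2)
        - (b - a) ^ 2 / 12 * ∫ x in a..b, (deriv s x) ^ 2|
      ≤ 3 * (b - a) ^ 4 * M₂ * (M₁ + (b - a) * M₂) := by
  have hs' : ContDiff ℝ 1 (deriv s) := hs.deriv'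
  set c := (a + b) / 2 with hc_def
  set A := deriv s c
  set g := fun x => s x - s c - A * (x - c) with hg_def
  have hc : c ∈ Icc a b := ⟨by linarith, by linarith⟩
  have hg_le : ∀ x ∈ Icc a b, |g x| ≤ M₂ * (b - a) ^ 2 := fun x hx =>
    abs_sub_sub_deriv_mul_le (fun z _ => hs.differentiable two_ne_zero z)
      (fun z _ => hs'.differentiable one_ne_zero z) hM₂ hc hx
  have hs'_le : ∀ x ∈ Icc a b, |deriv s x - A| ≤ M₂ * (b - a) := fun x hx =>
    abs_sub_le_of_abs_deriv_le (fun z _ => hs'.differentiable one_ne_zero z) hM₂ hx hc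
  rw [integral_sq_sub_average_of_eq_affine_add (t := s c) (A := A) (g := g)
      ((hs.continuous.sub continuous_const).sub (by fun_prop)).continuousOn
      (fun x => by simp only [hg_def]; ring),
    integral_sq_eq_const_add hs'.continuous.continuousOn A]
  refine abs_variance_expansion_sub_le (sub_nonneg.2 hab.le) (hM₁ c hc) ?_ ?_ ?_ ?_ ?_
  · refine (abs_integral_le_of_abs_le (C := (b - a) * (M₂ * (b - a) ^ 2)) hab.le
      fun x hx => ?_).trans_eq (by ring)
    rw [abs_mul]
    exact mul_le_mul (Real.dist_le_of_mem_Icc hx hc) (hg_le x hx) (abs_nonneg _)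
      (sub_nonneg.2 hab.le)
  · exact (abs_integral_sq_le hab.le hg_le).trans_eq (by ring)
  · have h := abs_integral_le_of_abs_le hab.le hg_le
    rw [abs_mul, abs_inv, abs_of_pos (sub_pos.2 hab), abs_pow]
    calc (b - a)⁻¹ * |∫ x in a..b, g x| ^ 2 ≤ (b - a)⁻¹ * (M₂ * (b - a) ^ 2 * (b - a)) ^ 2 := by
          gcongr
      _ = M₂ ^ 2 * (b - a) ^ 5 := by field_simp [(sub_pos.2 hab).ne']
  · exact (abs_integral_le_of_abs_le hab.le hs'_le).trans_eq (by ring)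
  · exact (abs_integral_sq_le hab.le hs'_le).trans_eq (by ring)

/-- There is an absolute constant `L` such that: if `s` is C² with `|s'| ≤ M₁`
and `|s''| ≤ M₂` on `[0,1]`, `I = [a,b] ⊆ [0,1]` has length `ℓ`, and `s_I`
is the mean of `s` on `I`, then
`|∫_I (s − s_I)² − (ℓ²/12)·∫_I s'(x)² dx| ≤ L·ℓ⁴·M₂·(M₁+M₂)`. -/
theorem stmt_7 :
    ∃ L : ℝ, 0 < L ∧
      ∀ (s : ℝ → ℝ), ContDiff ℝ 2 s →
      ∀ (M₁ M₂ : ℝ),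
        (∀ x ∈ Set.Icc (0:ℝ) 1, |deriv s x| ≤ M₁) →
        (∀ x ∈ Set.Icc (0:ℝ) 1, |deriv (deriv s) x| ≤ M₂) →
      ∀ (a b : ℝ), 0 ≤ a → a < b → b ≤ 1 →
        |(∫ x in a..b, (s x - (b - a)⁻¹ * ∫ t in a..b, s t) ^ 2)
            - (b - a) ^ 2 / 12 * ∫ x in a..b, (deriv s x) ^ 2|
          ≤ L * (b - a) ^ 4 * M₂ * (M₁ + M₂) := by
  refine ⟨3, by norm_num, fun s hs M₁ M₂ hM₁ hM₂ a b ha hab hb => ?_⟩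
  have hI : Icc a b ⊆ Icc 0 1 := Icc_subset_Icc ha hb
  have hM₂0 : 0 ≤ M₂ := (abs_nonneg _).trans (hM₂ a (hI (left_mem_Icc.2 hab.le)))
  refine (abs_integral_sq_sub_average_sub_le hs hab (fun x hx => hM₁ x (hI hx))
    (fun x hx => hM₂ x (hI hx))).trans ?_
  have hℓ : b - a ≤ 1 := by linarith
  gcongr
  exact mul_le_of_le_one_left hM₂0 hℓ
end

section
/- Let Z be a binomial random variable with parameters n ≥ 1 and p ∈ (0,1], and define δ_{n,p} = np·E[Z^{-1}·1_{Z>0}] − 1. Then δ_{n,p} is bounded: there exists an absolute constant L₁ such that |δ_{n,p}| ≤ L₁ for all n, p. -/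
/-!
Since `(n + 1) * C(n, k) = (k + 1) * C(n + 1, k + 1)` and `n / k ≤ 2 (n + 1) / (k + 1)` for `k ≥ 1`,
each term of `n p E[Z⁻¹ 1_{Z>0}]` is at most twice the corresponding term of the
`Binomial(n + 1, p)` distribution shifted by one. Hence `0 ≤ n p E[Z⁻¹ 1_{Z>0}] ≤ 2`, so `|δ_{n,p}| ≤ 1`.
-/

open Finset

lemma Nat.cast_div_mul_choose_le_two_mul_choose_succ (n : ℕ) {k : ℕ} (hk : 1 ≤ k) :
    (n : ℝ) / k * n.choose k ≤ 2 * (n + 1).choose (k + 1) := by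
  have hk' : (1 : ℝ) ≤ k := by exact_mod_cast hk
  have hchoose : ((n : ℝ) + 1) * n.choose k = (n + 1).choose (k + 1) * ((k : ℝ) + 1) := by
    exact_mod_cast Nat.add_one_mul_choose_eq n k
  rw [div_mul_eq_mul_div, div_le_iff₀ (by positivity)]
  nlinarith [mul_nonneg (Nat.cast_nonneg ((n + 1).choose (k + 1)) : (0 : ℝ) ≤ _) (sub_nonneg.2 hk')]

lemma sum_range_pow_succ_mul_pow_mul_choose_succ_le (x : ℝ) {y : ℝ} (hy : 0 ≤ y) (n : ℕ) :
    ∑ k ∈ range (n + 1), x ^ (k + 1) * y ^ (n - k) * (n + 1).choose (k + 1) ≤ (x + y) ^ (n + 1) := by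
  rw [add_pow, sum_range_succ' _ (n + 1)]
  simp only [Nat.add_sub_add_right, le_add_iff_nonneg_right]
  positivity

lemma binomial_mul_expect_inv_le_two (n : ℕ) {p : ℝ} (hp₀ : 0 ≤ p) (hp₁ : p ≤ 1) :
    (n : ℝ) * p * ∑ k ∈ Icc 1 n, 1 / (k : ℝ) * n.choose k * p ^ k * (1 - p) ^ (n - k) ≤ 2 := by
  have hq : 0 ≤ 1 - p := sub_nonneg.2 hp₁
  calc (n : ℝ) * p * ∑ k ∈ Icc 1 n, 1 / (k : ℝ) * n.choose k * p ^ k * (1 - p) ^ (n - k)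
      = ∑ k ∈ Icc 1 n, (n : ℝ) / k * n.choose k * (p ^ (k + 1) * (1 - p) ^ (n - k)) := by
        rw [mul_sum]
        exact sum_congr rfl fun k _ => by ring
    _ ≤ ∑ k ∈ Icc 1 n, 2 * (n + 1).choose (k + 1) * (p ^ (k + 1) * (1 - p) ^ (n - k)) := by
        refine sum_le_sum fun k hk => ?_
        exact mul_le_mul_of_nonneg_right
          (Nat.cast_div_mul_choose_le_two_mul_choose_succ n (mem_Icc.1 hk).1) (by positivity)
    _ = 2 * ∑ k ∈ Icc 1 n, p ^ (k + 1) * (1 - p) ^ (n - k) * (n + 1).choose (k + 1) := by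
        rw [mul_sum]
        exact sum_congr rfl fun k _ => by ring
    _ ≤ 2 * ∑ k ∈ range (n + 1), p ^ (k + 1) * (1 - p) ^ (n - k) * (n + 1).choose (k + 1) := by
        gcongr 2 * ?_
        refine sum_le_sum_of_subset_of_nonneg (fun k hk => ?_) fun k _ _ => by positivity
        simp only [mem_Icc, mem_range] at hk ⊢
        omega
    _ ≤ 2 := by
        have := sum_range_pow_succ_mul_pow_mul_choose_succ_le p hq n
        rw [add_sub_cancel, one_pow] at this
        linarith

/-- For `Z ~ Binomial(n,p)` with `n ≥ 1`, `p ∈ (0,1]`, the quantity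
`δ_{n,p} = np·E[Z⁻¹ 1_{Z>0}] − 1`, with
`E[Z⁻¹ 1_{Z>0}] = Σ_{k=1}^n (1/k) C(n,k) p^k (1−p)^{n−k}`, is bounded by an
absolute constant `L₁`. -/
theorem stmt_15 :
    ∃ L₁ : ℝ, 0 < L₁ ∧
      ∀ (n : ℕ) (p : ℝ), 1 ≤ n → 0 < p → p ≤ 1 →
        |(n : ℝ) * p *
            (∑ k ∈ Finset.Icc 1 n,
              (1 / (k : ℝ)) * (n.choose k) * p ^ k * (1 - p) ^ (n - k)) - 1|
          ≤ L₁ := by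
  refine ⟨1, one_pos, fun n p _ hp₀ hp₁ => ?_⟩
  have hq : 0 ≤ 1 - p := sub_nonneg.2 hp₁
  have hlower : 0 ≤ (n : ℝ) * p *
      ∑ k ∈ Icc 1 n, 1 / (k : ℝ) * n.choose k * p ^ k * (1 - p) ^ (n - k) := by
    positivity
  have hupper := binomial_mul_expect_inv_le_two n hp₀.le hp₁
  exact abs_sub_le_iff.2 ⟨by linarith, by linarith⟩
end
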